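/- arXiv:1504.00950 — 3 statements merged into one kernel-verified Lean document; each statement's English description precedes it below -/
import Mathlib

section
/- (van der Corput inequality) Let u₀, u₁, …, u_{N−1} be complex numbers and let H be an integer with 0 ≤ H ≤ N−1. Then |(1/N) ∑_{n=0}^{N−1} u_n|² ≤ ((N+H)/(N²(H+1))) ∑_{n=0}^{N−1} |u_n|² + 2((N+H)/(N²(H+1)²)) ∑_{h=1}^{H} (H+1−h) · Re(∑_{n=0}^{N−h−1} u_{n+h} · conj(u_n)). -/
/-!
Extend `u` by zero outside `[0, N)` and put `W m = ∑_{h ≤ H} u (m - h)` for `m < N + H`. Every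
`u n` occurs in `H + 1` of the `W m`, so `∑ W m = (H + 1) ∑ u n`, and Cauchy–Schwarz over the
`N + H` indices gives `(H + 1)² ‖∑ u n‖² ≤ (N + H) ∑ ‖W m‖²`. Expanding `‖W m‖²` and summing
over `m`, the pair of shifts `(h, h')` contributes the correlation of `u` at lag `|h - h'|`,
and the lag `d ≥ 1` is attained by `2 (H + 1 - d)` ordered pairs.
-/

open Finset ComplexConjugate

theorem Finset.sum_range_sum_range_of_symm {M : Type*} [AddCommMonoid M] (n : ℕ)
    (g : ℕ → ℕ → M) (hg : ∀ i j, g i j = g j i) :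
    ∑ i ∈ range n, ∑ j ∈ range n, g i j
      = ∑ i ∈ range n, g i i + 2 • ∑ i ∈ range n, ∑ j ∈ range i, g i j := by
  induction n with
  | zero => simp
  | succ n ih =>
    simp only [sum_range_succ, sum_add_distrib, ih, smul_add, two_nsmul, hg _ n]
    abel

theorem Finset.sum_range_sum_range_sub {R : Type*} [CommRing R] (n : ℕ) (f : ℕ → R) :
    ∑ i ∈ range (n + 1), ∑ j ∈ range i, f (i - j) = ∑ d ∈ Icc 1 n, ((n : R) + 1 - d) * f d := by
  induction n with
  | zero => simp
  | succ n ih =>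
    have hreflect : ∑ j ∈ range (n + 1), f (n + 1 - j) = ∑ d ∈ Icc 1 (n + 1), f d := by
      rw [← sum_range_reflect, ← Ico_add_one_right_eq_Icc, sum_Ico_eq_sum_range]
      refine sum_congr (by simp) fun j hj => ?_
      congr 1
      simp only [mem_range] at hj
      omega
    rw [sum_range_succ, ih, hreflect, sum_Icc_succ_top (by omega), sum_Icc_succ_top (by omega)]
    push_cast
    simp only [add_mul, sub_mul, sum_add_distrib, sum_sub_distrib, one_mul]
    ring

def truncShift {M : Type*} [Zero M] (N h : ℕ) (u : ℕ → M) (m : ℕ) : M :=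
  if h ≤ m ∧ m - h < N then u (m - h) else 0

def autocorrelation {R : Type*} [CommSemiring R] [StarRing R] (N : ℕ) (u : ℕ → R) (d : ℕ) : R :=
  ∑ n ∈ range (N - d), u (n + d) * conj (u n)

theorem sum_range_truncShift {M : Type*} [AddCommMonoid M] {N H h : ℕ} (hh : h ≤ H)
    (u : ℕ → M) : ∑ m ∈ range (N + H), truncShift N h u m = ∑ n ∈ range N, u n := by
  have hsupp : (range (N + H)).filter (fun m => h ≤ m ∧ m - h < N) = Ico h (h + N) := by
    ext m
    simp only [mem_filter, mem_range, mem_Ico]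
    omega
  unfold truncShift
  rw [← sum_filter, hsupp, sum_Ico_eq_sum_range]
  simp only [add_tsub_cancel_left]

theorem sum_range_truncShift_mul_conj {R : Type*} [CommSemiring R] [StarRing R] {N H h h' : ℕ}
    (hh : h ≤ H) (hh' : h' ≤ h) (u : ℕ → R) :
    ∑ m ∈ range (N + H), truncShift N h' u m * conj (truncShift N h u m)
      = autocorrelation N u (h - h') := by
  have hsupp : (range (N + H)).filter (fun m => (h' ≤ m ∧ m - h' < N) ∧ (h ≤ m ∧ m - h < N))
      = Ico h (h + (N - (h - h'))) := by
    ext m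
    simp only [mem_filter, mem_range, mem_Ico]
    omega
  have hprod : ∀ m, truncShift N h' u m * conj (truncShift N h u m)
      = if (h' ≤ m ∧ m - h' < N) ∧ (h ≤ m ∧ m - h < N)
          then u (m - h') * conj (u (m - h)) else 0 := by
    intro m
    unfold truncShift
    split_ifs <;> simp_all
  simp only [hprod]
  rw [← sum_filter, hsupp, sum_Ico_eq_sum_range, autocorrelation, add_tsub_cancel_left]
  refine sum_congr rfl fun n _ => ?_
  rw [add_tsub_cancel_left, show h + n - h' = n + (h - h') by omega]

theorem RCLike.re_mul_conj {𝕜 : Type*} [RCLike 𝕜] (z : 𝕜) : re (z * conj z) = ‖z‖ ^ 2 := by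
  rw [mul_conj, ← ofReal_pow, ofReal_re]

open RCLike in
theorem re_autocorrelation_zero {𝕜 : Type*} [RCLike 𝕜] (N : ℕ) (u : ℕ → 𝕜) :
    re (autocorrelation N u 0) = ∑ n ∈ range N, ‖u n‖ ^ 2 := by
  simp only [autocorrelation, Nat.sub_zero, add_zero, map_sum, re_mul_conj]

open RCLike in
theorem sum_norm_sq_sum_truncShift {𝕜 : Type*} [RCLike 𝕜] (N H : ℕ) (u : ℕ → 𝕜) :
    ∑ m ∈ range (N + H), ‖∑ h ∈ range (H + 1), truncShift N h u m‖ ^ 2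
      = (H + 1) * ∑ n ∈ range N, ‖u n‖ ^ 2
        + 2 * ∑ d ∈ Icc 1 H, ((H : ℝ) + 1 - d) * re (autocorrelation N u d) := by
  set g : ℕ → ℕ → ℝ := fun h h' =>
    re (∑ m ∈ range (N + H), truncShift N h u m * conj (truncShift N h' u m))
  have hexpand : ∑ m ∈ range (N + H), ‖∑ h ∈ range (H + 1), truncShift N h u m‖ ^ 2
      = ∑ h ∈ range (H + 1), ∑ h' ∈ range (H + 1), g h h' := by
    simp only [g, ← re_mul_conj, map_sum, sum_mul_sum]
    rw [sum_comm]
    exact sum_congr rfl fun h _ => sum_comm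
  have hsymm : ∀ h h', g h h' = g h' h := fun h h' => by
    simp only [g]
    rw [← conj_re, map_sum]
    simp only [map_mul, conj_conj, mul_comm]
  have hcorr : ∀ h ≤ H, ∀ h' ≤ h, g h h' = re (autocorrelation N u (h - h')) := fun h hh h' hh' => by
    rw [hsymm]
    exact congrArg re (sum_range_truncShift_mul_conj hh hh' u)
  rw [hexpand, sum_range_sum_range_of_symm _ g hsymm, nsmul_eq_mul, Nat.cast_ofNat,
    ← sum_range_sum_range_sub H (fun d => re (autocorrelation N u d))]
  congr 1
  · rw [sum_congr rfl fun h hh => (hcorr h (mem_range_succ_iff.mp hh) h le_rfl)]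
    simp only [Nat.sub_self]
    rw [sum_const, card_range, re_autocorrelation_zero, nsmul_eq_mul]
    push_cast
    ring
  · refine congrArg _ (sum_congr rfl fun h hh => sum_congr rfl fun h' hh' => ?_)
    exact hcorr h (mem_range_succ_iff.mp hh) h' (mem_range.mp hh').le

theorem norm_sum_sq_le_card_mul_sum_norm_sq {ι E : Type*} [SeminormedAddCommGroup E]
    (s : Finset ι) (f : ι → E) : ‖∑ i ∈ s, f i‖ ^ 2 ≤ #s * ∑ i ∈ s, ‖f i‖ ^ 2 :=
  (pow_le_pow_left₀ (norm_nonneg _) (norm_sum_le s f) 2).trans (sq_sum_le_card_mul_sum_sq ..)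

theorem van_der_corput_inequality_general (N : ℕ) (u : ℕ → ℂ)
    (H : ℕ) :
    ‖(1 / (N : ℂ)) * ∑ n ∈ Finset.range N, u n‖ ^ 2 ≤
      (((N : ℝ) + H) / ((N : ℝ) ^ 2 * ((H : ℝ) + 1))) *
          ∑ n ∈ Finset.range N, ‖u n‖ ^ 2
        + 2 * (((N : ℝ) + H) / ((N : ℝ) ^ 2 * ((H : ℝ) + 1) ^ 2)) *
          ∑ h ∈ Finset.Icc 1 H, ((H : ℝ) + 1 - h) *
            (∑ n ∈ Finset.range (N - h), u (n + h) * (starRingEnd ℂ) (u n)).re := by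
  have hCS := norm_sum_sq_le_card_mul_sum_norm_sq (range (N + H))
    fun m => ∑ h ∈ range (H + 1), truncShift N h u m
  rw [sum_comm, sum_congr rfl fun h hh => sum_range_truncShift (mem_range_succ_iff.mp hh) u,
    sum_const, card_range, card_range, RCLike.norm_nsmul ℝ, sum_norm_sq_sum_truncShift] at hCS
  simp only [nsmul_eq_mul, Nat.cast_succ, Nat.cast_add, mul_pow, RCLike.re_to_complex] at hCS
  change _ ≤ _ * _ + _ * ∑ h ∈ Icc 1 H, _ * (autocorrelation N u h).re
  set S := ∑ n ∈ range N, u n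
  set A := ∑ n ∈ range N, ‖u n‖ ^ 2
  set B := ∑ h ∈ Icc 1 H, ((H : ℝ) + 1 - h) * (autocorrelation N u h).re
  calc ‖(1 / (N : ℂ)) * S‖ ^ 2 = (H + 1) ^ 2 * ‖S‖ ^ 2 / (N ^ 2 * (H + 1) ^ 2) := by
        rw [norm_mul, norm_div, norm_one, Complex.norm_natCast]
        field_simp
    _ ≤ (N + H) * ((H + 1) * A + 2 * B) / (N ^ 2 * (H + 1) ^ 2) := by gcongr
    _ = _ := by field_simp

/-- van der Corput's inequality: for complex numbers `u₀, …, u_{N−1}` and an integer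
`0 ≤ H ≤ N−1`,
`|(1/N) ∑_{n=0}^{N−1} u_n|² ≤ ((N+H)/(N²(H+1))) ∑_{n=0}^{N−1} |u_n|²
  + 2((N+H)/(N²(H+1)²)) ∑_{h=1}^{H} (H+1−h) Re(∑_{n=0}^{N−h−1} u_{n+h} conj(u_n))`. -/
theorem van_der_corput_inequality (N : ℕ) (hN : 0 < N) (u : ℕ → ℂ)
    (H : ℕ) (hH : H ≤ N - 1) :
    ‖(1 / (N : ℂ)) * ∑ n ∈ Finset.range N, u n‖ ^ 2 ≤
      (((N : ℝ) + H) / ((N : ℝ) ^ 2 * ((H : ℝ) + 1))) *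
          ∑ n ∈ Finset.range N, ‖u n‖ ^ 2
        + 2 * (((N : ℝ) + H) / ((N : ℝ) ^ 2 * ((H : ℝ) + 1) ^ 2)) *
          ∑ h ∈ Finset.Icc 1 H, ((H : ℝ) + 1 - h) *
            (∑ n ∈ Finset.range (N - h), u (n + h) * (starRingEnd ℂ) (u n)).re :=
  van_der_corput_inequality_general N u H
end

section
/- Let (X, 𝓑, P) be a probability space, let T₁, T₂, T₃ : X → X be measure-preserving transformations, and let f₁, f₂, f₃ : X → ℂ be bounded measurable functions. Then for P-almost every x ∈ X and every integer N ≥ 1, |(1/N²) ∑_{n=1}^{N} ∑_{m=1}^{N} μ(n) μ(m) μ(n+m) f₁(T₁ⁿx) f₂(T₂^m x) f₃(T₃^{n+m} x)| ≤ √2 · ‖f₂‖_∞ · ‖f₃‖_∞ · sup_{t∈ℝ} |(1/N) ∑_{n=1}^{N} μ(n) f₁(T₁ⁿx) e^{−2πint}|. -/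
/-!
Pick `Q` beyond every frequency `n + m ≤ 2N`. Orthogonality of the `Q`-th roots of unity turns the
convolution `∑ aₙ bₘ c_{n+m}` into `Q⁻¹ ∑_{j<Q} â(j/Q) b̂(j/Q) ĉ(-j/Q)`, where
`â(t) = ∑ aₙ e(-nt)`. Bounding `|â|` by its supremum, Cauchy–Schwarz and Parseval in `j` leave
`‖b‖₂ ‖c‖₂ ≤ √N ‖f₂‖_∞ · √(2N) ‖f₃‖_∞`, the `√2` coming from the `2N - 1` values of `n + m`.
Since `T₂, T₃` preserve `P`, almost every orbit stays below the essential suprema.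
-/

open Finset MeasureTheory ArithmeticFunction Complex Real
open scoped ComplexConjugate ArithmeticFunction.Moebius

theorem sum_range_exp_int_mul_div_eq_ite {Q : ℕ} {d : ℤ} (hd : |d| < Q) :
    ∑ j ∈ range Q, exp (2 * π * I * d * (j / Q : ℝ)) = if d = 0 then (Q : ℂ) else 0 := by
  have hQ : Q ≠ 0 := by rintro rfl; exact absurd hd (by simp)
  set ζ := exp (2 * π * I / Q)
  have hζ : IsPrimitiveRoot ζ Q := isPrimitiveRoot_exp Q hQ
  have hpow (j : ℕ) : exp (2 * π * I * d * (j / Q : ℝ)) = (ζ ^ d) ^ j := by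
    rw [← exp_int_mul, ← Complex.exp_nat_mul]
    push_cast
    ring_nf
  simp_rw [hpow]
  split_ifs with h
  · simp [h]
  · have hne : ζ ^ d ≠ 1 := fun h1 =>
      h (Int.eq_zero_of_abs_lt_dvd ((hζ.zpow_eq_one_iff_dvd d).1 h1) hd)
    rw [geom_sum_eq hne, ← zpow_natCast, ← zpow_mul, mul_comm, zpow_mul, zpow_natCast,
      hζ.pow_eq_one, one_zpow, sub_self, zero_div]

theorem sum_range_exp_neg_mul_exp_eq_ite {Q k k' : ℕ} (hk : k < Q) (hk' : k' < Q) :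
    ∑ j ∈ range Q, exp (-(2 * π * I * k * (j / Q : ℝ))) * exp (2 * π * I * k' * (j / Q : ℝ))
      = if k = k' then (Q : ℂ) else 0 := by
  have h := sum_range_exp_int_mul_div_eq_ite (Q := Q) (d := k' - k) (by rw [abs_lt]; omega)
  simp only [sub_eq_zero, Nat.cast_inj, eq_comm (a := k')] at h
  rw [← h]
  refine sum_congr rfl fun j _ => ?_
  rw [← Complex.exp_add]
  push_cast
  ring_nf

noncomputable def expSum (S : Finset ℕ) (a : ℕ → ℂ) (t : ℝ) : ℂ :=
  ∑ n ∈ S, a n * exp (-(2 * π * I * n * t))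

noncomputable def addConv (S S' : Finset ℕ) (a b : ℕ → ℂ) (k : ℕ) : ℂ :=
  ∑ n ∈ S, ∑ m ∈ S', if n + m = k then a n * b m else 0

section expSum

variable {S S' T : Finset ℕ}

theorem norm_expSum_le (a : ℕ → ℂ) (t : ℝ) : ‖expSum S a t‖ ≤ ∑ n ∈ S, ‖a n‖ := by
  refine (norm_sum_le _ _).trans (sum_le_sum fun n _ => ?_)
  simp [norm_exp]

theorem conj_expSum (a : ℕ → ℂ) (t : ℝ) :
    conj (expSum S a t) = expSum S (fun n => conj (a n)) (-t) := by
  simp only [expSum, map_sum, map_mul, ← exp_conj]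
  refine sum_congr rfl fun n _ => ?_
  simp only [map_neg, map_mul, conj_ofReal, conj_I, map_natCast, map_ofNat, ofReal_neg]
  ring_nf

theorem norm_expSum_neg (a : ℕ → ℂ) (t : ℝ) :
    ‖expSum S a (-t)‖ = ‖expSum S (fun n => conj (a n)) t‖ := by
  rw [← norm_conj, conj_expSum, neg_neg]

theorem expSum_mul_expSum (hST : ∀ n ∈ S, ∀ m ∈ S', n + m ∈ T) (a b : ℕ → ℂ) (t : ℝ) :
    expSum S a t * expSum S' b t = expSum T (addConv S S' a b) t := by
  symm
  simp only [expSum, addConv, sum_mul, ite_mul, zero_mul]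
  rw [sum_comm]
  refine sum_congr rfl fun n hn => ?_
  rw [sum_comm, mul_sum]
  refine sum_congr rfl fun m hm => ?_
  rw [sum_ite_eq T, if_pos (hST n hn m hm), mul_mul_mul_comm, ← Complex.exp_add]
  push_cast
  ring_nf

theorem sum_range_expSum_mul_expSum_neg {Q : ℕ} (hS : ∀ k ∈ S, k < Q) (a b : ℕ → ℂ) :
    ∑ j ∈ range Q, expSum S a (j / Q) * expSum S b (-(j / Q)) = Q * ∑ k ∈ S, a k * b k := by
  calc ∑ j ∈ range Q, expSum S a (j / Q) * expSum S b (-(j / Q))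
      = ∑ k' ∈ S, ∑ k ∈ S, a k * b k' * ∑ j ∈ range Q,
          exp (-(2 * π * I * k * (j / Q : ℝ))) * exp (2 * π * I * k' * (j / Q : ℝ)) := by
        simp only [expSum, sum_mul, mul_sum]
        rw [sum_comm]
        refine sum_congr rfl fun k' _ => ?_
        rw [sum_comm]
        refine sum_congr rfl fun k _ => sum_congr rfl fun j _ => ?_
        rw [ofReal_neg, mul_neg, neg_neg]
        ring
    _ = Q * ∑ k ∈ S, a k * b k := by
        rw [mul_sum]
        refine sum_congr rfl fun k' hk' => ?_
        simp +contextual only [sum_range_exp_neg_mul_exp_eq_ite (hS _ _) (hS _ hk'), mul_ite,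
          mul_zero, sum_ite_eq', if_pos hk']
        ring

theorem sum_range_norm_expSum_sq {Q : ℕ} (hS : ∀ k ∈ S, k < Q) (a : ℕ → ℂ) :
    ∑ j ∈ range Q, ‖expSum S a (j / Q)‖ ^ 2 = Q * ∑ k ∈ S, ‖a k‖ ^ 2 := by
  apply ofReal_injective
  push_cast
  simp_rw [← mul_conj', conj_expSum]
  exact sum_range_expSum_mul_expSum_neg hS _ _

theorem sum_range_expSum_mul_expSum_mul_expSum_neg {Q : ℕ}
    (hST : ∀ n ∈ S, ∀ m ∈ S', n + m ∈ T) (hT : ∀ k ∈ T, k < Q) (a b c : ℕ → ℂ) :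
    ∑ j ∈ range Q, expSum S a (j / Q) * expSum S' b (j / Q) * expSum T c (-(j / Q))
      = Q * ∑ n ∈ S, ∑ m ∈ S', a n * b m * c (n + m) := by
  simp_rw [expSum_mul_expSum hST, sum_range_expSum_mul_expSum_neg hT, addConv, sum_mul]
  rw [sum_comm]
  refine congrArg _ (sum_congr rfl fun n hn => ?_)
  rw [sum_comm]
  refine sum_congr rfl fun m hm => ?_
  simp [ite_mul, sum_ite_eq, hST n hn m hm]

theorem norm_sum_sum_mul_mul_add_le (hST : ∀ n ∈ S, ∀ m ∈ S', n + m ∈ T)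
    (a b c : ℕ → ℂ) {M : ℝ} (hM : ∀ t, ‖expSum S a t‖ ≤ M) :
    ‖∑ n ∈ S, ∑ m ∈ S', a n * b m * c (n + m)‖
      ≤ M * √(∑ m ∈ S', ‖b m‖ ^ 2) * √(∑ k ∈ T, ‖c k‖ ^ 2) := by
  set Q := (S' ∪ T).sup id + 1
  have hlt : ∀ k ∈ S' ∪ T, k < Q := fun k hk => Nat.lt_succ_of_le (le_sup (f := id) hk)
  have hS' : ∀ m ∈ S', m < Q := fun m hm => hlt m (mem_union_left T hm)
  have hT : ∀ k ∈ T, k < Q := fun k hk => hlt k (mem_union_right S' hk)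
  have hQ : (0 : ℝ) < Q := Nat.cast_pos.2 (Nat.succ_pos _)
  have hM0 : 0 ≤ M := (norm_nonneg _).trans (hM 0)
  set B : ℕ → ℝ := fun j => ‖expSum S' b (j / Q)‖
  set C : ℕ → ℝ := fun j => ‖expSum T (fun k => conj (c k)) (j / Q)‖
  refine le_of_mul_le_mul_left ?_ hQ
  calc (Q : ℝ) * ‖∑ n ∈ S, ∑ m ∈ S', a n * b m * c (n + m)‖
      = ‖∑ j ∈ range Q, expSum S a (j / Q) * expSum S' b (j / Q) * expSum T c (-(j / Q))‖ := by
        rw [sum_range_expSum_mul_expSum_mul_expSum_neg hST hT, norm_mul, Complex.norm_natCast]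
    _ ≤ ∑ j ∈ range Q, M * (B j * C j) := by
        refine (norm_sum_le _ _).trans (sum_le_sum fun j _ => ?_)
        rw [norm_mul, norm_mul, norm_expSum_neg, mul_assoc]
        exact mul_le_mul_of_nonneg_right (hM _) (by positivity)
    _ ≤ M * (√(∑ j ∈ range Q, B j ^ 2) * √(∑ j ∈ range Q, C j ^ 2)) := by
        rw [← mul_sum]
        exact mul_le_mul_of_nonneg_left (Real.sum_mul_le_sqrt_mul_sqrt _ _ _) hM0
    _ = Q * (M * √(∑ m ∈ S', ‖b m‖ ^ 2) * √(∑ k ∈ T, ‖c k‖ ^ 2)) := by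
        simp only [B, C, sum_range_norm_expSum_sq hS', sum_range_norm_expSum_sq hT, norm_conj,
          Real.sqrt_mul hQ.le]
        linear_combination M * √(∑ m ∈ S', ‖b m‖ ^ 2) * √(∑ k ∈ T, ‖c k‖ ^ 2) *
          Real.mul_self_sqrt hQ.le

end expSum

theorem norm_moebius_mul_le (n : ℕ) (z : ℂ) : ‖(μ n : ℂ) * z‖ ≤ ‖z‖ := by
  rw [norm_mul, norm_intCast]
  exact mul_le_of_le_one_left (norm_nonneg z) (mod_cast abs_moebius_le_one)

theorem sum_norm_sq_le_card_mul_sq {ι E : Type*} [SeminormedAddCommGroup E] {s : Finset ι}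
    {f : ι → E} {B : ℝ} (hf : ∀ k ∈ s, ‖f k‖ ≤ B) : ∑ k ∈ s, ‖f k‖ ^ 2 ≤ #s * B ^ 2 := by
  rw [← nsmul_eq_mul]
  exact sum_le_card_nsmul _ _ _ fun k hk => pow_le_pow_left₀ (norm_nonneg _) (hf k hk) 2

theorem norm_moebius_cubic_average_le {N : ℕ} (hN : 1 ≤ N) {a b c : ℕ → ℂ} {B₂ B₃ M : ℝ}
    (hM : ∀ t : ℝ, ‖(1 / (N : ℂ)) * expSum (Icc 1 N) (fun n => μ n * a n) t‖ ≤ M)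
    (hb : ∀ m ∈ Icc 1 N, ‖b m‖ ≤ B₂) (hc : ∀ k ∈ Icc 2 (2 * N), ‖c k‖ ≤ B₃) :
    ‖(1 / (N : ℂ) ^ 2) * ∑ n ∈ Icc 1 N, ∑ m ∈ Icc 1 N,
        (μ n : ℂ) * μ m * μ (n + m) * a n * b m * c (n + m)‖ ≤ √2 * B₂ * B₃ * M := by
  have hN0 : (0 : ℝ) < N := by exact_mod_cast hN
  have hM0 : 0 ≤ M := (norm_nonneg _).trans (hM 0)
  have hB₂ : 0 ≤ B₂ := (norm_nonneg _).trans (hb 1 (by simp [hN]))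
  have hB₃ : 0 ≤ B₃ := (norm_nonneg _).trans (hc 2 (by simp [hN]))
  have hST : ∀ n ∈ Icc 1 N, ∀ m ∈ Icc 1 N, n + m ∈ Icc 2 (2 * N) := by
    simp only [mem_Icc]
    omega
  have ha : ∀ t, ‖expSum (Icc 1 N) (fun n => μ n * a n) t‖ ≤ N * M := fun t => by
    have := hM t
    rwa [norm_mul, norm_div, norm_one, Complex.norm_natCast, one_div_mul_eq_div,
      div_le_iff₀' hN0] at this
  have hb' : ∑ m ∈ Icc 1 N, ‖(μ m : ℂ) * b m‖ ^ 2 ≤ N * B₂ ^ 2 := by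
    simpa using sum_norm_sq_le_card_mul_sq fun m hm =>
      (norm_moebius_mul_le m (b m)).trans (hb m hm)
  have hc' : ∑ k ∈ Icc 2 (2 * N), ‖(μ k : ℂ) * c k‖ ^ 2 ≤ 2 * N * B₃ ^ 2 := by
    refine (sum_norm_sq_le_card_mul_sq fun k hk =>
      (norm_moebius_mul_le k (c k)).trans (hc k hk)).trans ?_
    gcongr
    rw [Nat.card_Icc]
    norm_cast
    omega
  have key := norm_sum_sum_mul_mul_add_le hST _ (fun m => μ m * b m) (fun k => μ k * c k) ha
  calc _ = ‖∑ n ∈ Icc 1 N, ∑ m ∈ Icc 1 N,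
          (μ n * a n) * (μ m * b m) * (μ (n + m) * c (n + m))‖ / N ^ 2 := by
        rw [norm_mul, norm_div, norm_one, norm_pow, Complex.norm_natCast, one_div_mul_eq_div]
        congr 2
        exact sum_congr rfl fun n _ => sum_congr rfl fun m _ => by ring
    _ ≤ N * M * √(N * B₂ ^ 2) * √(2 * N * B₃ ^ 2) / N ^ 2 := by
        gcongr
        refine key.trans ?_
        gcongr
    _ = √2 * B₂ * B₃ * M := by
        rw [Real.sqrt_mul' _ (sq_nonneg _), Real.sqrt_mul' _ (sq_nonneg _), Real.sqrt_sq hB₂,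
          Real.sqrt_sq hB₃, Real.sqrt_mul zero_le_two]
        field_simp
        rw [Real.sq_sqrt hN0.le]
        ring

section EssSup

variable {α E : Type*} [MeasurableSpace α] [NormedAddCommGroup E] {ν : Measure α}

theorem ae_norm_le_eLpNorm_top_toReal {f : α → E} (hf : eLpNorm f ⊤ ν ≠ ⊤) :
    ∀ᵐ x ∂ν, ‖f x‖ ≤ (eLpNorm f ⊤ ν).toReal := by
  filter_upwards [enorm_ae_le_eLpNormEssSup f ν] with x hx
  rw [eLpNorm_exponent_top] at hf ⊢
  simpa using ENNReal.toReal_mono hf hx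

theorem MeasureTheory.MeasurePreserving.ae_forall_norm_iterate_le_eLpNorm_top {T : α → α}
    (hT : MeasurePreserving T ν ν) {f : α → E} (hf : eLpNorm f ⊤ ν ≠ ⊤) :
    ∀ᵐ x ∂ν, ∀ n : ℕ, ‖f (T^[n] x)‖ ≤ (eLpNorm f ⊤ ν).toReal :=
  ae_all_iff.2 fun n =>
    (hT.iterate n).quasiMeasurePreserving.ae (ae_norm_le_eLpNorm_top_toReal hf)

theorem eLpNorm_top_ne_top_of_forall_norm_le {f : α → E} (hf : ∃ C, ∀ x, ‖f x‖ ≤ C) :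
    eLpNorm f ⊤ ν ≠ ⊤ := by
  obtain ⟨C, hC⟩ := hf
  exact (eLpNormEssSup_lt_top_of_ae_bound (ae_of_all _ hC)).ne

end EssSup

theorem cubic_average_moebius_sup_bound_general
    {X : Type*} [MeasurableSpace X]
    (P : Measure X)
    (T₁ T₂ T₃ : X → X)
    (hT₂ : MeasurePreserving T₂ P P)
    (hT₃ : MeasurePreserving T₃ P P)
    (f₁ f₂ f₃ : X → ℂ)
    (hb₂ : ∃ C, ∀ x, ‖f₂ x‖ ≤ C)
    (hb₃ : ∃ C, ∀ x, ‖f₃ x‖ ≤ C) :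
    ∀ᵐ x ∂P, ∀ N : ℕ, 1 ≤ N →
      ‖(1 / (N : ℂ) ^ 2) *
          ∑ n ∈ Finset.Icc 1 N, ∑ m ∈ Finset.Icc 1 N,
            (ArithmeticFunction.moebius n : ℂ) * (ArithmeticFunction.moebius m : ℂ) *
              (ArithmeticFunction.moebius (n + m) : ℂ) *
              f₁ (T₁^[n] x) * f₂ (T₂^[m] x) * f₃ (T₃^[n + m] x)‖
        ≤ Real.sqrt 2 * (eLpNorm f₂ ⊤ P).toReal * (eLpNorm f₃ ⊤ P).toReal *
            ⨆ t : ℝ, ‖(1 / (N : ℂ)) * ∑ n ∈ Finset.Icc 1 N,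
              (ArithmeticFunction.moebius n : ℂ) * f₁ (T₁^[n] x) *
                Complex.exp (-(2 * Real.pi * Complex.I * n * t))‖ := by
  filter_upwards
    [hT₂.ae_forall_norm_iterate_le_eLpNorm_top (eLpNorm_top_ne_top_of_forall_norm_le hb₂),
      hT₃.ae_forall_norm_iterate_le_eLpNorm_top (eLpNorm_top_ne_top_of_forall_norm_le hb₃)]
    with x hx₂ hx₃ N hN
  have hbdd : BddAbove (Set.range fun t : ℝ =>
      ‖(1 / (N : ℂ)) * expSum (Icc 1 N) (fun n => μ n * f₁ (T₁^[n] x)) t‖) :=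
    ⟨_, Set.forall_mem_range.2 fun t => (norm_mul_le _ _).trans
      (mul_le_mul_of_nonneg_left (norm_expSum_le _ t) (norm_nonneg _))⟩
  exact (norm_moebius_cubic_average_le hN (le_ciSup hbdd) (fun m _ => hx₂ m) (fun k _ => hx₃ k) :)

/-- The cubic average of order 2 with Möbius weight is bounded by
`√2 · ‖f₂‖_∞ · ‖f₃‖_∞ · sup_t |(1/N) ∑_{n=1}^{N} μ(n) f₁(T₁ⁿx) e^{−2πint}|`. -/
theorem cubic_average_moebius_sup_bound
    {X : Type*} [MeasurableSpace X]
    (P : Measure X) [IsProbabilityMeasure P]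
    (T₁ T₂ T₃ : X → X)
    (hT₁ : MeasurePreserving T₁ P P) (hT₂ : MeasurePreserving T₂ P P)
    (hT₃ : MeasurePreserving T₃ P P)
    (f₁ f₂ f₃ : X → ℂ)
    (hf₁ : Measurable f₁) (hf₂ : Measurable f₂) (hf₃ : Measurable f₃)
    (hb₁ : ∃ C, ∀ x, ‖f₁ x‖ ≤ C)
    (hb₂ : ∃ C, ∀ x, ‖f₂ x‖ ≤ C)
    (hb₃ : ∃ C, ∀ x, ‖f₃ x‖ ≤ C) :
    ∀ᵐ x ∂P, ∀ N : ℕ, 1 ≤ N →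
      ‖(1 / (N : ℂ) ^ 2) *
          ∑ n ∈ Finset.Icc 1 N, ∑ m ∈ Finset.Icc 1 N,
            (ArithmeticFunction.moebius n : ℂ) * (ArithmeticFunction.moebius m : ℂ) *
              (ArithmeticFunction.moebius (n + m) : ℂ) *
              f₁ (T₁^[n] x) * f₂ (T₂^[m] x) * f₃ (T₃^[n + m] x)‖
        ≤ Real.sqrt 2 * (eLpNorm f₂ ⊤ P).toReal * (eLpNorm f₃ ⊤ P).toReal *
            ⨆ t : ℝ, ‖(1 / (N : ℂ)) * ∑ n ∈ Finset.Icc 1 N,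
              (ArithmeticFunction.moebius n : ℂ) * f₁ (T₁^[n] x) *
                Complex.exp (-(2 * Real.pi * Complex.I * n * t))‖ :=
  cubic_average_moebius_sup_bound_general P T₁ T₂ T₃ hT₂ hT₃ f₁ f₂ f₃ hb₂ hb₃
end

section
/- (Bessel/Parseval estimate for weighted correlations) Let N be a positive integer, and let a₁, …, a_N and b₁, …, b_{2N} be complex numbers. Then ∑_{m=1}^{N} |(1/N) ∑_{n=1}^{N} a_n b_{n+m}|² ≤ ∫_0^1 |(1/N) ∑_{n=1}^{N} a_n e^{−2πint}|² · |∑_{p=1}^{2N} b_p e^{2πipt}|² dt. -/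
/-!
The product `F · G` of the two exponential sums is a trigonometric polynomial
`∑_{n,p} (a_n b_p / N) e^{2πi(p-n)t}`, whose coefficient at frequency `m ∈ [1, N]` is
exactly the correlation `(1/N) ∑_n a_n b_{n+m}` (every `n + m` lies in `[1, 2N]`).
By orthonormality of the exponentials on `[0, 1]`, `∫ |F G|²` is the sum of the squared moduli
of all these coefficients, which dominates the sum over `m ∈ [1, N]`.
-/

open Finset intervalIntegral Complex ComplexConjugate

noncomputable def fourierExp (k : ℤ) (t : ℝ) : ℂ := exp (2 * Real.pi * I * k * t)

@[fun_prop]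
lemma continuous_fourierExp (k : ℤ) : Continuous (fourierExp k) := by
  unfold fourierExp; fun_prop

lemma fourierExp_add (k l : ℤ) (t : ℝ) :
    fourierExp (k + l) t = fourierExp k t * fourierExp l t := by
  simp only [fourierExp, ← exp_add]; push_cast; ring_nf

lemma conj_fourierExp (k : ℤ) (t : ℝ) : conj (fourierExp k t) = fourierExp (-k) t := by
  simp only [fourierExp, ← exp_conj, map_mul, conj_I, conj_ofReal, map_ofNat, map_intCast]
  push_cast; ring_nf

lemma integral_fourierExp (k : ℤ) :
    ∫ t in (0 : ℝ)..1, fourierExp k t = if k = 0 then 1 else 0 := by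
  split_ifs with hk
  · simp [hk, fourierExp]
  · have hc : 2 * Real.pi * I * k ≠ 0 := by simp [Real.pi_ne_zero, I_ne_zero, hk]
    have hperiod : exp (2 * Real.pi * I * k) = 1 := by
      rw [show 2 * Real.pi * I * k = k * (2 * Real.pi * I) by ring]
      exact exp_int_mul_two_pi_mul_I k
    simpa [fourierExp, hperiod] using integral_exp_mul_complex (a := 0) (b := 1) hc

lemma integral_fourierExp_mul_conj (k l : ℤ) :
    ∫ t in (0 : ℝ)..1, fourierExp k t * conj (fourierExp l t) = if k = l then 1 else 0 := by
  simp_rw [conj_fourierExp, ← fourierExp_add, integral_fourierExp, add_neg_eq_zero]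

lemma integral_norm_sq_sum_fourierExp (s : Finset ℤ) (c : ℤ → ℂ) :
    ∫ t in (0 : ℝ)..1, ‖∑ k ∈ s, c k * fourierExp k t‖ ^ 2 = ∑ k ∈ s, ‖c k‖ ^ 2 := by
  have hexpand (t : ℝ) : ((‖∑ k ∈ s, c k * fourierExp k t‖ ^ 2 : ℝ) : ℂ) =
      ∑ k ∈ s, ∑ l ∈ s, c k * conj (c l) * (fourierExp k t * conj (fourierExp l t)) := by
    push_cast
    rw [← mul_conj', map_sum, sum_mul_sum]
    refine sum_congr rfl fun k _ => sum_congr rfl fun l _ => ?_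
    rw [map_mul]; ring
  apply ofReal_injective
  rw [← intervalIntegral.integral_ofReal]
  simp_rw [hexpand]
  rw [integral_finsetSum fun _ _ => Continuous.intervalIntegrable (by fun_prop) _ _]
  push_cast
  refine sum_congr rfl fun k hk => ?_
  rw [integral_finsetSum fun _ _ => Continuous.intervalIntegrable (by fun_prop) _ _]
  simp_rw [integral_const_mul, integral_fourierExp_mul_conj, mul_ite, mul_one, mul_zero,
    sum_ite_eq, if_pos hk, mul_conj']

section Fibers

variable {ι : Type*} (S : Finset ι) (w : ι → ℂ) (κ : ι → ℤ)

lemma sum_mul_fourierExp_eq_sum_fiberwise (t : ℝ) :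
    ∑ q ∈ S, w q * fourierExp (κ q) t =
      ∑ k ∈ S.image κ, (∑ q ∈ S with κ q = k, w q) * fourierExp k t := by
  rw [← sum_fiberwise_of_maps_to fun q hq => mem_image_of_mem κ hq]
  refine sum_congr rfl fun k _ => ?_
  rw [sum_mul]
  exact sum_congr rfl fun q hq => by rw [(mem_filter.1 hq).2]

lemma sum_norm_sq_sum_fiber_le_integral (M : Finset ℤ) :
    ∑ k ∈ M, ‖∑ q ∈ S with κ q = k, w q‖ ^ 2 ≤
      ∫ t in (0 : ℝ)..1, ‖∑ q ∈ S, w q * fourierExp (κ q) t‖ ^ 2 := by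
  simp only [sum_mul_fourierExp_eq_sum_fiberwise S w κ, integral_norm_sq_sum_fourierExp]
  have hfiber_empty : ∀ k ∈ M, k ∉ M ∩ S.image κ → ‖∑ q ∈ S with κ q = k, w q‖ ^ 2 = 0 := by
    intro k hkM hk
    rw [filter_false_of_mem fun q hq (hqk : κ q = k) =>
      hk (mem_inter.2 ⟨hkM, hqk ▸ mem_image_of_mem κ hq⟩)]
    simp
  calc ∑ k ∈ M, ‖∑ q ∈ S with κ q = k, w q‖ ^ 2
      = ∑ k ∈ M ∩ S.image κ, ‖∑ q ∈ S with κ q = k, w q‖ ^ 2 :=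
        (sum_subset inter_subset_left hfiber_empty).symm
    _ ≤ ∑ k ∈ S.image κ, ‖∑ q ∈ S with κ q = k, w q‖ ^ 2 :=
        sum_le_sum_of_subset_of_nonneg inter_subset_right fun _ _ _ => by positivity

end Fibers

lemma mul_sum_mul_sum_exp_eq_sum_fourierExp (c : ℂ) (A B : Finset ℕ) (a b : ℕ → ℂ) (t : ℝ) :
    (c * ∑ n ∈ A, a n * exp (-(2 * Real.pi * I * n * t))) *
        ∑ p ∈ B, b p * exp (2 * Real.pi * I * p * t) =
      ∑ q ∈ A ×ˢ B, c * (a q.1 * b q.2) * fourierExp (q.2 - q.1) t := by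
  rw [mul_assoc, sum_mul_sum, mul_sum, sum_product]
  refine sum_congr rfl fun n _ => ?_
  rw [mul_sum]
  refine sum_congr rfl fun p _ => ?_
  rw [sub_eq_add_neg, fourierExp_add]
  simp only [fourierExp]
  push_cast
  ring_nf

lemma filter_sub_eq_image_of_add_le {N K m : ℕ} (hm : N + m ≤ K) :
    {q ∈ Icc 1 N ×ˢ Icc 1 K | (q.2 : ℤ) - q.1 = m} = (Icc 1 N).image fun n => (n, n + m) := by
  ext ⟨n, p⟩
  simp only [mem_filter, mem_product, mem_Icc, mem_image, Prod.mk.injEq]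
  constructor
  · rintro ⟨⟨hn, hp⟩, hpn⟩
    exact ⟨n, hn, rfl, by omega⟩
  · rintro ⟨n', hn', rfl, rfl⟩
    omega

theorem bessel_parseval_weighted_correlations_general (N : ℕ)
    (a b : ℕ → ℂ) :
    ∑ m ∈ Finset.Icc 1 N,
        ‖(1 / (N : ℂ)) * ∑ n ∈ Finset.Icc 1 N, a n * b (n + m)‖ ^ 2
      ≤ ∫ t in (0 : ℝ)..1,
          ‖(1 / (N : ℂ)) * ∑ n ∈ Finset.Icc 1 N,
              a n * Complex.exp (-(2 * Real.pi * Complex.I * n * t))‖ ^ 2 *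
          ‖∑ p ∈ Finset.Icc 1 (2 * N),
              b p * Complex.exp (2 * Real.pi * Complex.I * p * t)‖ ^ 2 := by
  set S := Icc 1 N ×ˢ Icc 1 (2 * N)
  set w : ℕ × ℕ → ℂ := fun q => 1 / N * (a q.1 * b q.2)
  have hcorrelation : ∀ m ∈ Icc 1 N,
      1 / (N : ℂ) * ∑ n ∈ Icc 1 N, a n * b (n + m) = ∑ q ∈ S with (q.2 : ℤ) - q.1 = m, w q := by
    intro m hm
    rw [filter_sub_eq_image_of_add_le (by linarith [(mem_Icc.1 hm).2]),
      sum_image fun _ _ _ _ h => (Prod.ext_iff.1 h).1, mul_sum]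
  calc _ = ∑ m ∈ Icc 1 N, ‖∑ q ∈ S with (q.2 : ℤ) - q.1 = m, w q‖ ^ 2 :=
        sum_congr rfl fun m hm => by rw [hcorrelation m hm]
    _ = ∑ k ∈ (Icc 1 N).map Nat.castEmbedding, ‖∑ q ∈ S with (q.2 : ℤ) - q.1 = k, w q‖ ^ 2 := by
        rw [sum_map]; rfl
    _ ≤ ∫ t in (0 : ℝ)..1, ‖∑ q ∈ S, w q * fourierExp (q.2 - q.1) t‖ ^ 2 :=
        sum_norm_sq_sum_fiber_le_integral _ _ _ _
    _ = _ := by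
        simp_rw [← mul_pow, ← norm_mul, mul_sum_mul_sum_exp_eq_sum_fourierExp]
        rfl

/-- Bessel/Parseval estimate for weighted correlations:
`∑_{m=1}^{N} |(1/N) ∑_{n=1}^{N} a_n b_{n+m}|²
  ≤ ∫₀¹ |(1/N) ∑_{n=1}^{N} a_n e^{−2πint}|² |∑_{p=1}^{2N} b_p e^{2πipt}|² dt`. -/
theorem bessel_parseval_weighted_correlations (N : ℕ) (hN : 0 < N)
    (a b : ℕ → ℂ) :
    ∑ m ∈ Finset.Icc 1 N,
        ‖(1 / (N : ℂ)) * ∑ n ∈ Finset.Icc 1 N, a n * b (n + m)‖ ^ 2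
      ≤ ∫ t in (0 : ℝ)..1,
          ‖(1 / (N : ℂ)) * ∑ n ∈ Finset.Icc 1 N,
              a n * Complex.exp (-(2 * Real.pi * Complex.I * n * t))‖ ^ 2 *
          ‖∑ p ∈ Finset.Icc 1 (2 * N),
              b p * Complex.exp (2 * Real.pi * Complex.I * p * t)‖ ^ 2 :=
  bessel_parseval_weighted_correlations_general N a b
end
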